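/- arXiv:1801.04579 — 4 statements merged into one kernel-verified Lean document; each statement's English description precedes it below -/
import Mathlib

section
/- A finite set ℒ = {L_1,...,L_r} of linear forms in ℂ[x_0,...,x_n] is a Hadamard set if and only if all the linear forms L_i have the same support (i.e., for every variable x_j, either x_j appears with nonzero coefficient in every L_i or in none of them). -/
/-!
A common support is forced: in `c * (a j / P i j)` the factors `c` and `P i j` are nonzero, so
the support of every `A i` is that of `a`. Conversely, if all `A i` share a support `S`, take
for `a` the indicator of `S` and `P i j = 1 / A i j` on `S`, `P i j = 1` off `S`.
-/

open Function

section HadamardSet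

variable {K ι σ : Type*}

def IsHadamardSet [CommGroupWithZero K] (A : ι → σ → K) : Prop :=
  ∃ (a : σ → K) (P : ι → σ → K), (∀ i j, P i j ≠ 0) ∧
    ∀ i, ∃ c : K, c ≠ 0 ∧ A i = fun j => c * (a j / P i j)

theorem exists_support_eq_iff_forall_support_eq [Zero K] [One K] [NeZero (1 : K)]
    (A : ι → σ → K) :
    (∃ a : σ → K, ∀ i, support (A i) = support a) ↔ ∀ i i', support (A i) = support (A i') := by
  refine ⟨fun ⟨a, ha⟩ i i' => (ha i).trans (ha i').symm, fun h => ?_⟩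
  refine ⟨(⋃ i, support (A i)).indicator 1, fun i => ?_⟩
  rw [Set.support_indicator, support_one, Set.inter_univ]
  exact (Set.subset_iUnion (fun i => support (A i)) i).antisymm
    (Set.iUnion_subset fun i' => (h i' i).subset)

variable [CommGroupWithZero K]

theorem support_mul_div_eq {c : K} (hc : c ≠ 0) (a p : σ → K) (hp : ∀ j, p j ≠ 0) :
    support (fun j => c * (a j / p j)) = support a := by
  ext j
  simp [hc, hp j]

theorem isHadamardSet_iff_exists_support_eq (A : ι → σ → K) :
    IsHadamardSet A ↔ ∃ a : σ → K, ∀ i, support (A i) = support a := by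
  constructor
  · rintro ⟨a, P, hP, hA⟩
    refine ⟨a, fun i => ?_⟩
    obtain ⟨c, hc, hAi⟩ := hA i
    rw [hAi, support_mul_div_eq hc a (P i) (hP i)]
  · rintro ⟨a, ha⟩
    classical
    refine ⟨a, fun i j => if A i j = 0 then 1 else a j / A i j, fun i j => ?_,
      fun i => ⟨1, one_ne_zero, ?_⟩⟩
    · have hsupp : A i j ≠ 0 ↔ a j ≠ 0 := Set.ext_iff.mp (ha i) j
      dsimp only
      split_ifs with hij
      · exact one_ne_zero
      · exact div_ne_zero (hsupp.mp hij) hij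
    · funext j
      have hsupp : A i j ≠ 0 ↔ a j ≠ 0 := Set.ext_iff.mp (ha i) j
      by_cases hij : A i j = 0
      · have haj : a j = 0 := by simpa [hij] using hsupp
        simp [hij, haj]
      · have haj : a j ≠ 0 := hsupp.mp hij
        simp [hij, haj]

theorem isHadamardSet_iff_forall_support_eq (A : ι → σ → K) :
    IsHadamardSet A ↔ ∀ i i', support (A i) = support (A i') :=
  (isHadamardSet_iff_exists_support_eq A).trans (exists_support_eq_iff_forall_support_eq A)

end HadamardSet

theorem hadamard_set_iff_same_support_general (n r : ℕ) (A : Fin r → Fin (n + 1) → ℂ) :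
    (∃ (a : Fin (n + 1) → ℂ) (P : Fin r → Fin (n + 1) → ℂ),
        (∀ i j, P i j ≠ 0) ∧
        ∀ i, ∃ c : ℂ, c ≠ 0 ∧ A i = fun j => c * (a j / P i j))
      ↔ (∀ i i' j, A i j ≠ 0 ↔ A i' j ≠ 0) := by
  refine (isHadamardSet_iff_forall_support_eq A).trans ?_
  simp only [Set.ext_iff, mem_support]

/-- A finite set ℒ = {L₁,…,L_r} of (nonzero) linear forms, given by their coefficient
vectors A i, is a Hadamard set (∃ a linear form L = Σ aⱼxⱼ and points Pᵢ with all
coordinates nonzero such that Lᵢ is proportional to Σⱼ (aⱼ/pⱼ(i))xⱼ) if and only if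
all the Lᵢ have the same support. -/
theorem hadamard_set_iff_same_support (n r : ℕ) (A : Fin r → Fin (n + 1) → ℂ)
    (hA : ∀ i, A i ≠ 0) :
    (∃ (a : Fin (n + 1) → ℂ) (P : Fin r → Fin (n + 1) → ℂ),
        (∀ i j, P i j ≠ 0) ∧
        ∀ i, ∃ c : ℂ, c ≠ 0 ∧ A i = fun j => c * (a j / P i j))
      ↔ (∀ i i' j, A i j ≠ 0 ↔ A i' j ≠ 0) :=
  hadamard_set_iff_same_support_general n r A
end

section
/- Let ℒ = {L_1,...,L_r} be a generally linear set of linear forms with L_i = a_0(i)x_0+...+a_n(i)x_n and all coefficients a_j(i) ≠ 0. Let M be the r×(n+1) matrix with entries M_{ij} = 1/a_j(i). If there exists a vector a ∈ ℂ^{n+1} with all coordinates nonzero and M a = 0, then ℒ is a strong Hadamard set. -/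
/-! Take `b` with `b j ^ 2 = a j` (square roots exist in `ℂ`) and `P i j = b j / A i j`. Then
`A i j = b j / P i j`, and `∑ j, b j * P i j = ∑ j, a j / A i j = 0` is exactly `M a = 0`. -/

section

variable {K ι κ : Type*} [Field K]

theorem exists_ne_zero_sq_eq_of_ne_zero [IsAlgClosed K] {a : ι → K} (ha : ∀ j, a j ≠ 0) :
    ∃ b : ι → K, (∀ j, b j ≠ 0) ∧ ∀ j, b j ^ 2 = a j := by
  choose b hb using fun j => IsAlgClosed.exists_pow_nat_eq (a j) two_pos
  exact ⟨b, fun j hj => ha j (by rw [← hb j, hj, zero_pow two_ne_zero]), hb⟩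

theorem exists_hadamard_points_of_sum_sq_div_eq_zero [Fintype ι] {A : κ → ι → K}
    (hA : ∀ i j, A i j ≠ 0) {b : ι → K} (hb : ∀ j, b j ≠ 0) (hker : ∀ i, ∑ j, b j ^ 2 / A i j = 0) :
    ∃ P : κ → ι → K, (∀ i j, P i j ≠ 0) ∧ (∀ i, A i = fun j => b j / P i j) ∧
      ∀ i, ∑ j, b j * P i j = 0 := by
  refine ⟨fun i j => b j / A i j, fun i j => div_ne_zero (hb j) (hA i j),
    fun i => funext fun j => (div_div_cancel₀ (hb j)).symm, fun i => ?_⟩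
  calc ∑ j, b j * (b j / A i j) = ∑ j, b j ^ 2 / A i j := by
        simp only [mul_div_assoc', sq]
    _ = 0 := hker i

end

theorem kernel_vector_implies_strong_hadamard_general (n r : ℕ)
    (A : Fin r → Fin (n + 1) → ℂ) (hA : ∀ i j, A i j ≠ 0)
    (a : Fin (n + 1) → ℂ) (ha : ∀ j, a j ≠ 0)
    (hker : ∀ i, (∑ j, a j / A i j) = 0) :
    ∃ (b : Fin (n + 1) → ℂ) (P : Fin r → Fin (n + 1) → ℂ),
      (∀ i j, P i j ≠ 0) ∧
      (∀ i, ∃ c : ℂ, c ≠ 0 ∧ A i = fun j => c * (b j / P i j)) ∧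
      ∀ i, (∑ j, b j * P i j) = 0 := by
  obtain ⟨b, hb, hba⟩ := exists_ne_zero_sq_eq_of_ne_zero ha
  simp only [← hba] at hker
  obtain ⟨P, hP, hAP, hbP⟩ := exists_hadamard_points_of_sum_sq_div_eq_zero hA hb hker
  exact ⟨b, P, hP, fun i => ⟨1, one_ne_zero, by simpa only [one_mul] using hAP i⟩, hbP⟩

/-- Let ℒ = {L₁,…,L_r} (Lᵢ = Σⱼ aⱼ(i)xⱼ, coefficient vectors A i, all aⱼ(i) ≠ 0) be a
generally linear set, and M the r×(n+1) matrix with entries 1/aⱼ(i).  If there is a vector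
a ∈ ℂ^(n+1) with all coordinates nonzero and M a = 0, then ℒ is a strong Hadamard set. -/
theorem kernel_vector_implies_strong_hadamard (n r : ℕ) (hr : n + 1 ≤ r)
    (A : Fin r → Fin (n + 1) → ℂ) (hA : ∀ i j, A i j ≠ 0)
    (hgen : ∀ f : Fin (n + 1) → Fin r, Function.Injective f →
      LinearIndependent ℂ fun k => A (f k))
    (a : Fin (n + 1) → ℂ) (ha : ∀ j, a j ≠ 0)
    (hker : ∀ i, (∑ j, a j / A i j) = 0) :
    ∃ (b : Fin (n + 1) → ℂ) (P : Fin r → Fin (n + 1) → ℂ),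
      (∀ i j, P i j ≠ 0) ∧
      (∀ i, ∃ c : ℂ, c ≠ 0 ∧ A i = fun j => c * (b j / P i j)) ∧
      ∀ i, (∑ j, b j * P i j) = 0 :=
  kernel_vector_implies_strong_hadamard_general n r A hA a ha hker
end

section
/- (Case n = 2.) Let ℒ = {L_1,...,L_r} be a generally linear set of linear forms in ℂ[x_0,x_1,x_2] with L_i = a_0(i)x_0 + a_1(i)x_1 + a_2(i)x_2 and all coefficients a_j(i) ≠ 0. Let M be the r×3 matrix with entries 1/a_j(i). Then there exists x ∈ ℂ³ with all coordinates nonzero satisfying M x = 0 if and only if rank(M) ≤ 2. -/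
lemma aux_rows (r : ℕ) (hr : 3 ≤ r) (A : Fin r → Fin 3 → ℂ)
    (hgen : ∀ f : Fin 3 → Fin r, Function.Injective f →
      LinearIndependent ℂ fun k => A (f k))
    (w : Fin 3 → ℂ) (hw : ∀ i, ∑ j, A i j * w j = 0) : w = 0 := by
  set f : Fin 3 → Fin r := fun k => ⟨k.val, lt_of_lt_of_le k.isLt hr⟩ with hf
  have hinj : Function.Injective f := by
    intro a b hab
    have h2 : (f a).val = (f b).val := congrArg Fin.val hab
    exact Fin.ext h2
  set B : Matrix (Fin 3) (Fin 3) ℂ := Matrix.of fun k j => A (f k) j with hB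
  have hli : LinearIndependent ℂ (fun k => B k) := hgen f hinj
  have hunit : IsUnit B := Matrix.linearIndependent_rows_iff_isUnit.mp hli
  have hinjB : Function.Injective B.mulVec := Matrix.mulVec_injective_iff_isUnit.mpr hunit
  have : B.mulVec w = B.mulVec 0 := by
    rw [Matrix.mulVec_zero]
    funext i
    simpa [Matrix.mulVec, dotProduct, hB] using hw (f i)
  simpa using hinjB this

lemma aux_rank (r : ℕ) (N : Matrix (Fin r) (Fin 3) ℂ) :
    (∃ v : Fin 3 → ℂ, v ≠ 0 ∧ N.mulVec v = 0) ↔ N.rank ≤ 2 := by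
  have hsum := LinearMap.finrank_range_add_finrank_ker N.mulVecLin
  have h3 : Module.finrank ℂ (Fin 3 → ℂ) = 3 := by simp
  rw [h3] at hsum
  have hrk : N.rank = Module.finrank ℂ (LinearMap.range N.mulVecLin) := rfl
  constructor
  · rintro ⟨v, hv, hvz⟩
    have hvker : v ∈ LinearMap.ker N.mulVecLin := by
      simpa [Matrix.mulVecLin_apply] using hvz
    have hpos : 0 < Module.finrank ℂ (LinearMap.ker N.mulVecLin) := by
      rw [Module.finrank_pos_iff]
      exact ⟨⟨v, hvker⟩, 0, fun h => hv (by simpa using congrArg Subtype.val h)⟩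
    omega
  · intro h
    rw [hrk] at h
    have hpos : 0 < Module.finrank ℂ (LinearMap.ker N.mulVecLin) := by omega
    rw [Module.finrank_pos_iff] at hpos
    obtain ⟨v, hv⟩ := exists_ne (0 : LinearMap.ker N.mulVecLin)
    refine ⟨v, fun h => hv (by ext : 1; simpa using h), ?_⟩
    have h2 : N.mulVecLin v = 0 := v.2
    rwa [Matrix.mulVecLin_apply] at h2

lemma aux_zero_coord (r : ℕ) (hr : 3 ≤ r) (A : Fin r → Fin 3 → ℂ)
    (hA : ∀ i j, A i j ≠ 0)
    (hgen : ∀ f : Fin 3 → Fin r, Function.Injective f →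
      LinearIndependent ℂ fun k => A (f k))
    (v : Fin 3 → ℂ)
    (hv : ∀ i, (A i 0)⁻¹ * v 0 + (A i 1)⁻¹ * v 1 + (A i 2)⁻¹ * v 2 = 0)
    (j0 : Fin 3) (h0 : v j0 = 0) : v = 0 := by
  fin_cases j0
  · -- v 0 = 0
    have hw : ∀ i, ∑ j, A i j * (![0, v 2, v 1]) j = 0 := by
      intro i
      have h := hv i
      rw [show v 0 = 0 from h0] at h
      have h1 := hA i 1
      have h2 := hA i 2
      rw [Fin.sum_univ_three]
      simp only [Matrix.cons_val_zero, Matrix.cons_val_one, Matrix.head_cons,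
        Matrix.cons_val_two, Matrix.tail_cons]
      field_simp at h
      linear_combination h
    have hw0 := aux_rows r hr A hgen _ hw
    funext j
    fin_cases j
    · exact h0
    · simpa using congrFun hw0 2
    · simpa using congrFun hw0 1
  · -- v 1 = 0
    have hw : ∀ i, ∑ j, A i j * (![v 2, 0, v 0]) j = 0 := by
      intro i
      have h := hv i
      rw [show v 1 = 0 from h0] at h
      have h1 := hA i 0
      have h2 := hA i 2
      rw [Fin.sum_univ_three]
      simp only [Matrix.cons_val_zero, Matrix.cons_val_one, Matrix.head_cons,
        Matrix.cons_val_two, Matrix.tail_cons]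
      field_simp at h
      linear_combination h
    have hw0 := aux_rows r hr A hgen _ hw
    funext j
    fin_cases j
    · simpa using congrFun hw0 2
    · exact h0
    · simpa using congrFun hw0 0
  · -- v 2 = 0
    have hw : ∀ i, ∑ j, A i j * (![v 1, v 0, 0]) j = 0 := by
      intro i
      have h := hv i
      rw [show v 2 = 0 from h0] at h
      have h1 := hA i 0
      have h2 := hA i 1
      rw [Fin.sum_univ_three]
      simp only [Matrix.cons_val_zero, Matrix.cons_val_one, Matrix.head_cons,
        Matrix.cons_val_two, Matrix.tail_cons]
      field_simp at h
      linear_combination h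
    have hw0 := aux_rows r hr A hgen _ hw
    funext j
    fin_cases j
    · simpa using congrFun hw0 1
    · simpa using congrFun hw0 0
    · exact h0


/-- (Case n = 2.)  For a generally linear set ℒ = {L₁,…,L_r} in ℂ[x₀,x₁,x₂] with all
coefficients aⱼ(i) ≠ 0, and M the r×3 matrix with entries 1/aⱼ(i): there exists x ∈ ℂ³
with all coordinates nonzero and Mx = 0 if and only if rank M ≤ 2. -/
theorem kernel_vector_iff_rank_le_two (r : ℕ) (hr : 3 ≤ r)
    (A : Fin r → Fin 3 → ℂ) (hA : ∀ i j, A i j ≠ 0)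
    (hgen : ∀ f : Fin 3 → Fin r, Function.Injective f →
      LinearIndependent ℂ fun k => A (f k)) :
    (∃ x : Fin 3 → ℂ, (∀ j, x j ≠ 0) ∧
        Matrix.mulVec (Matrix.of fun i j => (A i j)⁻¹) x = 0)
      ↔ Matrix.rank (Matrix.of fun i j => (A i j)⁻¹) ≤ 2 := by
  constructor
  · rintro ⟨x, hx, hMx⟩
    exact (aux_rank r _).mp ⟨x, fun h => hx 0 (congrFun h 0), hMx⟩
  · intro h
    obtain ⟨v, hv, hMv⟩ := (aux_rank r _).mpr h
    refine ⟨v, ?_, hMv⟩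
    intro j0 hj0
    apply hv
    apply aux_zero_coord r hr A hA hgen v ?_ j0 hj0
    intro i
    have h := congrFun hMv i
    simpa [Matrix.mulVec, dotProduct, Fin.sum_univ_three, add_assoc] using h
end

section
/- Let L = a_0x_0+...+a_nx_n with all a_j ≠ 0, and for each i let P_i = [a_0/a_0(i) : ... : a_n/a_n(i)] where all a_j(i) ≠ 0. If Σ_j a_j²/a_j(i) = 0, then P_i lies on V(L), and P_i ⋆ V(L) = V(L_i) where L_i = a_0(i)x_0+...+a_n(i)x_n. -/
/-- Let L = Σ aⱼxⱼ with all aⱼ ≠ 0, and Lᵢ = Σ bⱼxⱼ with all bⱼ ≠ 0.  Set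
Pᵢ = [a₀/b₀ : … : aₙ/bₙ].  If Σⱼ aⱼ²/bⱼ = 0, then Pᵢ lies on V(L) and
Pᵢ ⋆ V(L) = V(Lᵢ). -/
theorem key_construction (n : ℕ) (a b : Fin (n + 1) → ℂ)
    (ha : ∀ j, a j ≠ 0) (hb : ∀ j, b j ≠ 0)
    (h : (∑ j, a j ^ 2 / b j) = 0) :
    (∑ j, a j * (a j / b j)) = 0 ∧
    {x : Fin (n + 1) → ℂ | ∃ q : Fin (n + 1) → ℂ,
        (∃ t, (a t / b t) * q t ≠ 0) ∧ (∑ j, a j * q j) = 0 ∧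
        x = fun j => (a j / b j) * q j}
      = {x : Fin (n + 1) → ℂ | x ≠ 0 ∧ (∑ j, b j * x j) = 0} := by
  constructor
  · rw [← h]
    exact Finset.sum_congr rfl fun j _ => by ring
  · ext x
    simp only [Set.mem_setOf_eq]
    constructor
    · rintro ⟨q, ⟨t, ht⟩, hsum, rfl⟩
      refine ⟨fun h0 => ht (congrFun h0 t), ?_⟩
      rw [← hsum]
      refine Finset.sum_congr rfl fun j _ => ?_
      rw [show b j * (a j / b j * q j) = a j * q j * (b j / b j) by ring,
        div_self (hb j), mul_one]
    · rintro ⟨hx, hsum⟩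
      have key : ∀ j, a j / b j * (b j / a j * x j) = x j := fun j => by
        rw [show a j / b j * (b j / a j * x j) = x j * (a j / a j) * (b j / b j) by ring,
          div_self (ha j), div_self (hb j), mul_one, mul_one]
      refine ⟨fun j => (b j / a j) * x j, ?_, ?_, ?_⟩
      · obtain ⟨t, ht⟩ := Function.ne_iff.mp hx
        exact ⟨t, by rw [key t]; simpa using ht⟩
      · rw [← hsum]
        refine Finset.sum_congr rfl fun j _ => ?_
        rw [show a j * (b j / a j * x j) = b j * x j * (a j / a j) by ring,
          div_self (ha j), mul_one]
      · funext j
        rw [key j]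
end
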